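/- arXiv:2101.10800 — 3 statements merged into one kernel-verified Lean document; each statement's English description precedes it below -/
import Mathlib

section
/- Define R(x) = max_{w ∈ W(x)} max_{π ∈ Π} πᵀ(b − Ax − Cw), where W(x) = {w : Gw ≤ g + Δx} is nonempty and bounded and Π = {π : Bᵀπ ≤ 0, −1 ≤ π ≤ 0}. Then x satisfies ∀ w ∈ W(x), Y(x,w) ≠ ∅ if and only if R(x) ≤ 0. -/
/-!
Fix `w` and put `d = b − Ax − Cw`; then `Y(x,w) ≠ ∅` means `∃ y ≥ 0, By ≤ d`. If such a `y`
exists, weak duality gives `πᵀd ≤ πᵀBy = (Bᵀπ)ᵀy ≤ 0` for every `π ∈ Π`. If not, Farkas' lemma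
yields `μ ≥ 0` with `μᵀB ≥ 0` and `μᵀd < 0`, and `π = −μ / (1 + Σ μᵢ)` lies in `Π` with
`πᵀd > 0`. Farkas' lemma is proved in Bartl's purely algebraic form, by induction on the number
of functionals. Since `W(x)` and `Π` are bounded, the values `πᵀd` are bounded above, so such a
positive value forces `R(x) > 0`.
-/

open Matrix

section Farkas

variable {𝕜 V : Type*} [Field 𝕜] [LinearOrder 𝕜] [IsStrictOrderedRing 𝕜]
  [AddCommGroup V] [Module 𝕜 V]

theorem Module.Dual.exists_nonneg_sum_eq_or_exists_neg_option {α : Type*} [Fintype α]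
    (ih : ∀ (a : α → Module.Dual 𝕜 V) (f : Module.Dual 𝕜 V),
      (∃ c : α → 𝕜, 0 ≤ c ∧ f = ∑ i, c i • a i) ∨ ∃ x, (∀ i, 0 ≤ a i x) ∧ f x < 0)
    (a : Option α → Module.Dual 𝕜 V) (f : Module.Dual 𝕜 V) :
    (∃ c : Option α → 𝕜, 0 ≤ c ∧ f = ∑ i, c i • a i) ∨ ∃ x, (∀ i, 0 ≤ a i x) ∧ f x < 0 := by
  simp only [Fintype.sum_option, Option.forall]
  obtain ⟨c, hc, rfl⟩ | ⟨x, hx, hfx⟩ := ih (a ∘ some) f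
  · exact .inl ⟨fun i => i.elim 0 c, fun i => by cases i; exacts [le_rfl, hc _], by simp⟩
  obtain hx₀ | hx₀ := le_or_gt 0 (a none x)
  · exact .inr ⟨x, ⟨hx₀, hx⟩, hfx⟩
  -- Project every functional along `x` onto the kernel of `a none` and recurse.
  obtain ⟨c, hc, hf⟩ | ⟨y, hy, hfy⟩ :=
    ih (fun i => a (some i) - (a (some i) x / a none x) • a none) (f - (f x / a none x) • a none)
  · refine .inl ⟨fun i => i.elim ((f x - ∑ i, c i * a (some i) x) / a none x) c,
      fun i => ?_, ?_⟩
    · cases i with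
      | none =>
        refine div_nonneg_of_nonpos ?_ hx₀.le
        have : 0 ≤ ∑ i, c i * a (some i) x := Finset.sum_nonneg fun i _ => mul_nonneg (hc i) (hx i)
        linarith
      | some i => exact hc i
    · have hsum : ∑ i, c i • (a (some i) - (a (some i) x / a none x) • a none) =
          ∑ i, c i • a (some i) - ((∑ i, c i * a (some i) x) / a none x) • a none := by
        simp only [smul_sub, Finset.sum_sub_distrib, smul_smul, ← Finset.sum_smul, Finset.sum_div,
          mul_div_assoc]
      calc f = (f - (f x / a none x) • a none) + (f x / a none x) • a none :=
            (sub_add_cancel _ _).symm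
        _ = _ := by simp only [hf, hsum, Option.elim_none, Option.elim_some]; module
  · have hproj : ∀ φ : Module.Dual 𝕜 V,
        φ (y - (a none y / a none x) • x) = (φ - (φ x / a none x) • a none) y := by
      intro φ
      simp only [map_sub, map_smul, smul_eq_mul, LinearMap.sub_apply, LinearMap.smul_apply]
      ring
    refine .inr ⟨y - (a none y / a none x) • x, ⟨?_, fun i => ?_⟩, ?_⟩
    · simp [hx₀.ne]
    · rw [hproj]; exact hy i
    · rw [hproj]; exact hfy

theorem Module.Dual.exists_nonneg_sum_eq_or_exists_neg {ι : Type*} [Fintype ι]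
    (a : ι → Module.Dual 𝕜 V) (f : Module.Dual 𝕜 V) :
    (∃ c : ι → 𝕜, 0 ≤ c ∧ f = ∑ i, c i • a i) ∨ ∃ x, (∀ i, 0 ≤ a i x) ∧ f x < 0 := by
  revert a f
  refine Finite.induction_empty_option (P := fun ι => ∀ [Fintype ι] (a : ι → Module.Dual 𝕜 V) f,
    (∃ c : ι → 𝕜, 0 ≤ c ∧ f = ∑ i, c i • a i) ∨ ∃ x, (∀ i, 0 ≤ a i x) ∧ f x < 0) ?_ ?_ ?_ ι
  · intro α β e ih _ a f
    have := Fintype.ofEquiv β e.symm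
    obtain ⟨c, hc, rfl⟩ | h := ih (a ∘ e) f
    · exact .inl ⟨c ∘ e.symm, fun i => hc _, by rw [← e.sum_comp]; simp⟩
    · obtain ⟨x, hx, hfx⟩ := h
      exact .inr ⟨x, fun i => by simpa using hx (e.symm i), hfx⟩
  · intro _ a f
    obtain rfl | hf := eq_or_ne f 0
    · exact .inl ⟨0, le_rfl, by simp⟩
    obtain ⟨x, hx⟩ := DFunLike.ne_iff.mp hf
    obtain hx | hx := hx.lt_or_gt
    · exact .inr ⟨x, isEmptyElim, hx⟩
    · exact .inr ⟨-x, isEmptyElim, by simpa using hx⟩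
  · intro α _ ih _ a f
    convert Module.Dual.exists_nonneg_sum_eq_or_exists_neg_option (fun a f => ih a f) a f

theorem Matrix.exists_nonneg_mulVec_le_or_exists_nonneg_vecMul_nonneg {m n : Type*} [Fintype m]
    [Fintype n] (B : Matrix m n 𝕜) (d : m → 𝕜) :
    (∃ y, 0 ≤ y ∧ B *ᵥ y ≤ d) ∨ ∃ μ, 0 ≤ μ ∧ 0 ≤ μ ᵥ* B ∧ μ ⬝ᵥ d < 0 := by
  classical
  obtain ⟨c, hc, hd⟩ | ⟨μ, hμ, hμd⟩ := Module.Dual.exists_nonneg_sum_eq_or_exists_neg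
    (Sum.elim (fun i => dotProductEquiv 𝕜 m (Pi.single i 1)) (fun j => dotProductEquiv 𝕜 m (Bᵀ j)))
    (dotProductEquiv 𝕜 m d)
  · refine .inl ⟨c ∘ Sum.inr, fun j => hc _, fun i => ?_⟩
    have hdi : d i = c (.inl i) + (B *ᵥ (c ∘ Sum.inr)) i := by
      simpa [Fintype.sum_sum_type, mulVec, dotProduct, Pi.single_apply, mul_comm]
        using congr($hd (Pi.single i 1))
    linarith [show 0 ≤ c (.inl i) from hc _]
  · refine .inr ⟨μ, fun i => ?_, fun j => ?_, by simpa [dotProduct_comm] using hμd⟩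
    · simpa using hμ (.inl i)
    · simpa [vecMul, dotProduct, mul_comm] using hμ (.inr j)

theorem Matrix.exists_normalized_farkas_certificate {m n : Type*} [Fintype m] [Fintype n] (B : Matrix m n 𝕜)
    (d : m → 𝕜) (h : ¬∃ y, 0 ≤ y ∧ B *ᵥ y ≤ d) :
    ∃ π, Bᵀ *ᵥ π ≤ 0 ∧ -1 ≤ π ∧ π ≤ 0 ∧ 0 < π ⬝ᵥ d := by
  obtain ⟨μ, hμ, hμB, hμd⟩ :=
    (B.exists_nonneg_mulVec_le_or_exists_nonneg_vecMul_nonneg d).resolve_left h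
  have hμs : ∀ i, μ i ≤ 1 + ∑ i, μ i := fun i => by
    linarith [Finset.single_le_sum (fun j _ => hμ j) (Finset.mem_univ i)]
  have hs : 0 < 1 + ∑ i, μ i := by linarith [Finset.sum_nonneg fun i (_ : i ∈ Finset.univ) => hμ i]
  refine ⟨-(1 + ∑ i, μ i)⁻¹ • μ, ?_, fun i => ?_, ?_, ?_⟩
  · rw [mulVec_transpose, smul_vecMul, neg_smul, neg_nonpos]
    exact smul_nonneg (inv_nonneg.2 hs.le) hμB
  · simpa [neg_le_neg_iff, inv_mul_le_one₀ hs] using hμs i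
  · rw [neg_smul, neg_nonpos]
    exact smul_nonneg (inv_nonneg.2 hs.le) hμ
  · rw [neg_smul, neg_dotProduct, smul_dotProduct, smul_eq_mul, neg_pos]
    exact mul_neg_of_pos_of_neg (inv_pos.2 hs) hμd

end Farkas

theorem Matrix.dotProduct_nonpos_of_mulVec_le {R m n : Type*} [CommRing R] [PartialOrder R]
    [IsOrderedRing R] [Fintype m] [Fintype n] (B : Matrix m n R) {π d : m → R} {y : n → R}
    (hBπ : Bᵀ *ᵥ π ≤ 0) (hπ : π ≤ 0) (hy : 0 ≤ y) (hBy : B *ᵥ y ≤ d) : π ⬝ᵥ d ≤ 0 :=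
  calc π ⬝ᵥ d ≤ π ⬝ᵥ (B *ᵥ y) := by
        simpa using dotProduct_le_dotProduct_of_nonneg_left hBy (neg_nonneg.2 hπ)
    _ = (Bᵀ *ᵥ π) ⬝ᵥ y := by rw [dotProduct_mulVec, mulVec_transpose]
    _ ≤ 0 := by simpa using dotProduct_nonneg_of_nonneg (neg_nonneg.2 hBπ) hy

theorem Bornology.IsBounded.bddAbove_image2 {E F α : Type*} [PseudoMetricSpace E] [ProperSpace E]
    [PseudoMetricSpace F] [ProperSpace F] [LinearOrder α] [TopologicalSpace α]
    [ClosedIciTopology α] [Nonempty α] {s : Set E} {t : Set F} (hs : IsBounded s)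
    (ht : IsBounded t) {f : E → F → α} (hf : Continuous (Function.uncurry f)) :
    BddAbove (Set.image2 f s t) := by
  refine ((hs.isCompact_closure.prod ht.isCompact_closure).bddAbove_image hf.continuousOn).mono ?_
  rintro _ ⟨x, hx, y, hy, rfl⟩
  exact ⟨(x, y), ⟨subset_closure hx, subset_closure hy⟩, rfl⟩

theorem stmt_4_general (m nx ny nw r : ℕ)
    (A : Matrix (Fin m) (Fin nx) ℝ) (B : Matrix (Fin m) (Fin ny) ℝ)
    (C : Matrix (Fin m) (Fin nw) ℝ) (b : Fin m → ℝ)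
    (G : Matrix (Fin r) (Fin nw) ℝ) (g : Fin r → ℝ) (Δ : Matrix (Fin r) (Fin nx) ℝ)
    (x : Fin nx → ℝ)
    (hbdd : Bornology.IsBounded {w : Fin nw → ℝ | G.mulVec w ≤ g + Δ.mulVec x}) :
    (∀ w ∈ {w : Fin nw → ℝ | G.mulVec w ≤ g + Δ.mulVec x},
        ({y : Fin ny → ℝ | A.mulVec x + B.mulVec y + C.mulVec w ≤ b ∧ 0 ≤ y}).Nonempty) ↔
    sSup {v : ℝ | ∃ w ∈ {w : Fin nw → ℝ | G.mulVec w ≤ g + Δ.mulVec x},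
        ∃ π ∈ {π : Fin m → ℝ | Bᵀ.mulVec π ≤ 0 ∧ -1 ≤ π ∧ π ≤ 0},
          v = π ⬝ᵥ (b - A.mulVec x - C.mulVec w)} ≤ 0 := by
  set W := {w : Fin nw → ℝ | G.mulVec w ≤ g + Δ.mulVec x}
  set P := {π : Fin m → ℝ | Bᵀ.mulVec π ≤ 0 ∧ -1 ≤ π ∧ π ≤ 0}
  have hfeas : ∀ w, ({y : Fin ny → ℝ | A.mulVec x + B.mulVec y + C.mulVec w ≤ b ∧ 0 ≤ y}).Nonempty ↔
      ∃ y, 0 ≤ y ∧ B *ᵥ y ≤ b - A *ᵥ x - C *ᵥ w := by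
    intro w
    refine exists_congr fun y =>
      ⟨fun ⟨h, hy⟩ => ⟨hy, fun i => ?_⟩, fun ⟨hy, h⟩ => ⟨fun i => ?_, hy⟩⟩ <;>
      · have := h i
        simp only [Pi.add_apply, Pi.sub_apply] at this ⊢
        linarith
  have hbddS : BddAbove {v : ℝ | ∃ w ∈ W, ∃ π ∈ P, v = π ⬝ᵥ (b - A.mulVec x - C.mulVec w)} := by
    refine (hbdd.bddAbove_image2 (isCompact_Icc (a := -1) (b := 0)).isBounded
      (f := fun w π => π ⬝ᵥ (b - A *ᵥ x - C *ᵥ w)) (by fun_prop)).mono ?_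
    rintro _ ⟨w, hw, π, ⟨-, hπ⟩, rfl⟩
    exact ⟨w, hw, π, hπ, rfl⟩
  constructor
  · intro h
    refine Real.sSup_le ?_ le_rfl
    rintro _ ⟨w, hw, π, ⟨hBπ, -, hπ⟩, rfl⟩
    obtain ⟨y, hy, hBy⟩ := (hfeas w).1 (h w hw)
    exact dotProduct_nonpos_of_mulVec_le B hBπ hπ hy hBy
  · intro h w hw
    by_contra hinf
    obtain ⟨π, hBπ, hπ₁, hπ₀, hpos⟩ := B.exists_normalized_farkas_certificate _ ((hfeas w).not.1 hinf)
    linarith [le_csSup hbddS ⟨w, hw, π, ⟨hBπ, hπ₁, hπ₀⟩, rfl⟩]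

/-- With `R(x) = max_{w ∈ W(x)} max_{π ∈ Π} πᵀ(b − Ax − Cw)`, where
`W(x) = {w : Gw ≤ g + Δx}` is nonempty and bounded and
`Π = {π : Bᵀπ ≤ 0, −1 ≤ π ≤ 0}`, the first-stage decision `x` satisfies
`∀ w ∈ W(x), Y(x,w) ≠ ∅` if and only if `R(x) ≤ 0`. -/
theorem stmt_4 (m nx ny nw r : ℕ)
    (A : Matrix (Fin m) (Fin nx) ℝ) (B : Matrix (Fin m) (Fin ny) ℝ)
    (C : Matrix (Fin m) (Fin nw) ℝ) (b : Fin m → ℝ)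
    (G : Matrix (Fin r) (Fin nw) ℝ) (g : Fin r → ℝ) (Δ : Matrix (Fin r) (Fin nx) ℝ)
    (x : Fin nx → ℝ)
    (hne : ({w : Fin nw → ℝ | G.mulVec w ≤ g + Δ.mulVec x}).Nonempty)
    (hbdd : Bornology.IsBounded {w : Fin nw → ℝ | G.mulVec w ≤ g + Δ.mulVec x}) :
    (∀ w ∈ {w : Fin nw → ℝ | G.mulVec w ≤ g + Δ.mulVec x},
        ({y : Fin ny → ℝ | A.mulVec x + B.mulVec y + C.mulVec w ≤ b ∧ 0 ≤ y}).Nonempty) ↔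
    sSup {v : ℝ | ∃ w ∈ {w : Fin nw → ℝ | G.mulVec w ≤ g + Δ.mulVec x},
        ∃ π ∈ {π : Fin m → ℝ | Bᵀ.mulVec π ≤ 0 ∧ -1 ≤ π ∧ π ≤ 0},
          v = π ⬝ᵥ (b - A.mulVec x - C.mulVec w)} ≤ 0 :=
  stmt_4_general m nx ny nw r A B C b G g Δ x hbdd
end

section
/- The constraint x ∈ X_R, where X_R = {x : ∀ w ∈ W(x), Y(x,w) ≠ ∅}, is equivalent to the semi-infinite constraint 0 ≥ πᵀ(b − Ax − Cw) for all π ∈ Π and all w ∈ W(x). -/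
/-!
For a fixed scenario `w`, the recourse problem `{y ≥ 0 : B y ≤ d}` with `d = b - A x - C w` is
infeasible exactly when Farkas' lemma provides a certificate `u ≥ 0` with `uᵀ B ≥ 0` and
`uᵀ d < 0`. These certificates form a cone, so nothing is lost by scaling them into the box
`0 ≤ u ≤ 1`; with `π = -u` this box is `Π`.

Farkas' lemma is proved for finitely many generators by induction on their number: if the
functional `f` separating `d` from the smaller cone is negative on the new generator `a`,
project along `a` onto `ker f` and apply the induction hypothesis to the projected generators.
-/

open Matrix

namespace PointedCone

variable {𝕜 V W : Type*} [Field 𝕜] [LinearOrder 𝕜] [IsStrictOrderedRing 𝕜]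
  [AddCommGroup V] [Module 𝕜 V] [AddCommGroup W] [Module 𝕜 W]

theorem apply_nonneg_of_mem_hull {s : Set V} {f : Module.Dual 𝕜 V} (hf : ∀ x ∈ s, 0 ≤ f x)
    {x : V} (hx : x ∈ hull 𝕜 s) : 0 ≤ f x := by
  induction hx using Submodule.span_induction with
  | mem x hx => exact hf x hx
  | zero => simp
  | add x y _ _ hx hy => simpa using add_nonneg hx hy
  | smul c x _ hx =>
    rw [← Nonneg.coe_smul, map_smul]
    exact mul_nonneg c.2 hx

theorem exists_mem_hull_of_mem_hull_image {P : V →ₗ[𝕜] W} {s : Set V} {y : W}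
    (hy : y ∈ hull 𝕜 (P '' s)) : ∃ x ∈ hull 𝕜 s, P x = y := by
  rwa [hull, ← P.coe_restrictScalars {c : 𝕜 // 0 ≤ c}, Submodule.span_image] at hy

variable (𝕜) in
theorem mem_hull_range_or_exists_dual_of_fin (n : ℕ) (a : Fin n → V) (d : V) :
    d ∈ hull 𝕜 (Set.range a) ∨
      ∃ f : Module.Dual 𝕜 V, (∀ i, 0 ≤ f (a i)) ∧ f d < 0 := by
  induction n generalizing d with
  | zero =>
    by_cases hd : d = 0
    · exact .inl (hd ▸ zero_mem _)
    obtain ⟨f, hf⟩ := Module.Projective.exists_dual_eq_one 𝕜 hd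
    exact .inr ⟨-f, finZeroElim, by simp [hf]⟩
  | succ n ih =>
    rw [Fin.range_fin_succ]
    rcases ih (Fin.tail a) d with hd | ⟨f, hf, hfd⟩
    · exact .inl (Submodule.span_mono (Set.subset_insert _ _) hd)
    by_cases h0 : 0 ≤ f (a 0)
    · exact .inr ⟨f, Fin.cases h0 hf, hfd⟩
    have ht : f (a 0) ≠ 0 := (not_le.1 h0).ne
    set P : V →ₗ[𝕜] V := LinearMap.id - (f (a 0))⁻¹ • f.smulRight (a 0) with hP
    have hP_apply (x : V) : P x = x - (f x / f (a 0)) • a 0 := by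
      simp [hP, div_eq_inv_mul, mul_smul]
    have hPa : P (a 0) = 0 := by simp [hP_apply, ht]
    rcases ih (P ∘ Fin.tail a) (P d) with hPd | ⟨g, hg, hgd⟩
    · rw [Set.range_comp] at hPd
      obtain ⟨z, hz, hPz⟩ := exists_mem_hull_of_mem_hull_image hPd
      have hfz : 0 ≤ f z := apply_nonneg_of_mem_hull (Set.forall_mem_range.2 hf) hz
      refine .inl (Submodule.mem_span_insert.2 ⟨⟨(f d - f z) / f (a 0), ?_⟩, z, hz, ?_⟩)
      · exact div_nonneg_of_nonpos (by linarith) (not_le.1 h0).le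
      · rw [hP_apply, hP_apply] at hPz
        rw [← Nonneg.coe_smul]
        linear_combination (norm := module) -hPz
    · refine .inr ⟨g ∘ₗ P, Fin.cases ?_ hg, hgd⟩
      simp [hPa]

variable (𝕜) in
theorem mem_hull_range_or_exists_dual {ι : Type*} [Finite ι] (a : ι → V) (d : V) :
    d ∈ hull 𝕜 (Set.range a) ∨
      ∃ f : Module.Dual 𝕜 V, (∀ i, 0 ≤ f (a i)) ∧ f d < 0 := by
  obtain ⟨n, ⟨e⟩⟩ := Finite.exists_equiv_fin ι
  rcases mem_hull_range_or_exists_dual_of_fin 𝕜 n (a ∘ e.symm) d with hd | ⟨f, hf, hfd⟩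
  · exact .inl (by rwa [EquivLike.range_comp] at hd)
  · exact .inr ⟨f, fun i => by simpa using hf (e i), hfd⟩

end PointedCone

theorem exists_pos_smul_le_one {𝕜 ι : Type*} [Field 𝕜] [LinearOrder 𝕜] [IsStrictOrderedRing 𝕜]
    [Finite ι] (u : ι → 𝕜) : ∃ t : 𝕜, 0 < t ∧ t • u ≤ 1 := by
  obtain ⟨M, hM⟩ := Set.finite_range u |>.bddAbove
  have hM1 : 0 < max M 1 := zero_lt_one.trans_le (le_max_right _ _)
  refine ⟨(max M 1)⁻¹, inv_pos.2 hM1, fun i => ?_⟩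
  rw [Pi.smul_apply, smul_eq_mul, inv_mul_eq_div]
  exact div_le_one_of_le₀ ((hM ⟨i, rfl⟩).trans (le_max_left _ _)) hM1.le

namespace Matrix

variable {𝕜 m n : Type*} [Field 𝕜] [LinearOrder 𝕜] [IsStrictOrderedRing 𝕜] [Fintype m]

theorem exists_nonneg_mulVec_le_iff [Fintype n] [DecidableEq m] (B : Matrix m n 𝕜) (d : m → 𝕜) :
    (∃ y, 0 ≤ y ∧ B *ᵥ y ≤ d) ↔ ∀ u, 0 ≤ u → 0 ≤ u ᵥ* B → 0 ≤ u ⬝ᵥ d := by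
  constructor
  · rintro ⟨y, hy, hBy⟩ u hu huB
    calc 0 ≤ u ᵥ* B ⬝ᵥ y := dotProduct_nonneg_of_nonneg huB hy
      _ = u ⬝ᵥ B *ᵥ y := (dotProduct_mulVec u B y).symm
      _ ≤ u ⬝ᵥ d := dotProduct_le_dotProduct_of_nonneg_left hBy hu
  intro h
  rcases PointedCone.mem_hull_range_or_exists_dual 𝕜
    (Sum.elim (fun j => Bᵀ j) (fun i => Pi.single i (1 : 𝕜))) d with hd | ⟨f, hf, hfd⟩
  · obtain ⟨c, hc⟩ := (Submodule.mem_span_range_iff_exists_fun _).1 hd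
    refine ⟨fun j => c (.inl j), fun j => (c (.inl j)).2, fun i => ?_⟩
    have hci := congrFun hc i
    simp only [Fintype.sum_sum_type, Finset.sum_apply, Sum.elim_inl, Sum.elim_inr,
      Pi.smul_apply, Pi.single_apply, ← Nonneg.coe_smul, smul_eq_mul, mul_ite, mul_one,
      mul_zero, Finset.sum_ite_eq, Finset.mem_univ, if_true, transpose_apply] at hci
    simp only [mulVec, dotProduct, mul_comm (B i _)]
    linarith [(c (.inr i)).2]
  · set u : m → 𝕜 := fun i => f (Pi.single i 1)
    have hfu (v : m → 𝕜) : f v = u ⬝ᵥ v := by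
      conv_lhs => rw [pi_eq_sum_univ' v]
      simp [u, dotProduct, mul_comm]
    have hu : 0 ≤ u := fun i => hf (.inr i)
    have huB : 0 ≤ u ᵥ* B := fun j => (hf (.inl j)).trans_eq (hfu _)
    exact absurd (hfu d ▸ h u hu huB) (not_le.2 hfd)

theorem forall_box_dotProduct_nonpos_iff (B : Matrix m n 𝕜) (d : m → 𝕜) :
    (∀ π ∈ {π | Bᵀ *ᵥ π ≤ 0 ∧ -1 ≤ π ∧ π ≤ 0}, π ⬝ᵥ d ≤ 0) ↔
      ∀ u, 0 ≤ u → 0 ≤ u ᵥ* B → 0 ≤ u ⬝ᵥ d := by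
  constructor
  · intro h u hu huB
    obtain ⟨t, ht, htu⟩ := exists_pos_smul_le_one u
    have hBtu : Bᵀ *ᵥ -(t • u) ≤ 0 := by
      rw [mulVec_neg, mulVec_smul, mulVec_transpose, neg_nonpos]
      exact smul_nonneg ht.le huB
    have := h (-(t • u)) ⟨hBtu, neg_le_neg htu, neg_nonpos.2 (smul_nonneg ht.le hu)⟩
    rw [neg_dotProduct, smul_dotProduct, neg_nonpos, smul_eq_mul] at this
    exact (mul_nonneg_iff_of_pos_left ht).1 this
  · rintro h π ⟨hBπ, -, hπ⟩
    have hπB : 0 ≤ -π ᵥ* B := by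
      rw [neg_vecMul, ← mulVec_transpose, neg_nonneg]
      exact hBπ
    simpa using h (-π) (neg_nonneg.2 hπ) hπB

end Matrix

theorem stmt_6_general (m nx ny nw r : ℕ)
    (A : Matrix (Fin m) (Fin nx) ℝ) (B : Matrix (Fin m) (Fin ny) ℝ)
    (C : Matrix (Fin m) (Fin nw) ℝ) (b : Fin m → ℝ)
    (G : Matrix (Fin r) (Fin nw) ℝ) (g : Fin r → ℝ) (Δ : Matrix (Fin r) (Fin nx) ℝ)
    (x : Fin nx → ℝ) :
    (∀ w ∈ {w : Fin nw → ℝ | G.mulVec w ≤ g + Δ.mulVec x},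
        ({y : Fin ny → ℝ | A.mulVec x + B.mulVec y + C.mulVec w ≤ b ∧ 0 ≤ y}).Nonempty) ↔
    (∀ π ∈ {π : Fin m → ℝ | Bᵀ.mulVec π ≤ 0 ∧ -1 ≤ π ∧ π ≤ 0},
      ∀ w ∈ {w : Fin nw → ℝ | G.mulVec w ≤ g + Δ.mulVec x},
        π ⬝ᵥ (b - A.mulVec x - C.mulVec w) ≤ 0) := by
  have feasible_iff (w : Fin nw → ℝ) :
      {y | A *ᵥ x + B *ᵥ y + C *ᵥ w ≤ b ∧ 0 ≤ y}.Nonempty ↔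
        ∃ y, 0 ≤ y ∧ B *ᵥ y ≤ b - A *ᵥ x - C *ᵥ w :=
    exists_congr fun y => by
      rw [Set.mem_ofPred_eq, and_comm, sub_sub, le_sub_iff_add_le', add_right_comm]
  calc _ ↔ ∀ w ∈ {w : Fin nw → ℝ | G *ᵥ w ≤ g + Δ *ᵥ x},
        ∀ π ∈ {π : Fin m → ℝ | Bᵀ *ᵥ π ≤ 0 ∧ -1 ≤ π ∧ π ≤ 0},
          π ⬝ᵥ (b - A *ᵥ x - C *ᵥ w) ≤ 0 := by
        refine forall₂_congr fun w _ => ?_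
        rw [feasible_iff, exists_nonneg_mulVec_le_iff, forall_box_dotProduct_nonpos_iff]
    _ ↔ _ := ⟨fun h π hπ w hw => h w hw π hπ, fun h w hw π hπ => h π hπ w hw⟩

/-- The constraint `x ∈ X_R`, with `X_R = {x : ∀ w ∈ W(x), Y(x,w) ≠ ∅}`, is
equivalent to the semi-infinite constraint `0 ≥ πᵀ(b − Ax − Cw)` for all
`π ∈ Π` and all `w ∈ W(x)`. -/
theorem stmt_6 (m nx ny nw r : ℕ)
    (A : Matrix (Fin m) (Fin nx) ℝ) (B : Matrix (Fin m) (Fin ny) ℝ)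
    (C : Matrix (Fin m) (Fin nw) ℝ) (b : Fin m → ℝ)
    (G : Matrix (Fin r) (Fin nw) ℝ) (g : Fin r → ℝ) (Δ : Matrix (Fin r) (Fin nx) ℝ)
    (x : Fin nx → ℝ)
    (hne : ({w : Fin nw → ℝ | G.mulVec w ≤ g + Δ.mulVec x}).Nonempty)
    (hbdd : Bornology.IsBounded {w : Fin nw → ℝ | G.mulVec w ≤ g + Δ.mulVec x}) :
    (∀ w ∈ {w : Fin nw → ℝ | G.mulVec w ≤ g + Δ.mulVec x},
        ({y : Fin ny → ℝ | A.mulVec x + B.mulVec y + C.mulVec w ≤ b ∧ 0 ≤ y}).Nonempty) ↔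
    (∀ π ∈ {π : Fin m → ℝ | Bᵀ.mulVec π ≤ 0 ∧ -1 ≤ π ∧ π ≤ 0},
      ∀ w ∈ {w : Fin nw → ℝ | G.mulVec w ≤ g + Δ.mulVec x},
        π ⬝ᵥ (b - A.mulVec x - C.mulVec w) ≤ 0) :=
  stmt_6_general m nx ny nw r A B C b G g Δ x
end

section
/- Lemma 1(e): In the modified Benders algorithm, the dual solutions π_1*, π_2*, … generated at distinct iterations are pairwise distinct: if j₁ < j₂ and π_{j₁}* were equal to π_{j₂}*, then since x^{j₂} satisfies the cut 0 ≥ π_{j₁}*ᵀ(b − Ax^{j₂} − Cw) for all w ∈ W(x^{j₂}), this contradicts R(x^{j₂}) = max_{w ∈ W(x^{j₂})} π_{j₂}*ᵀ(b − Ax^{j₂} − Cw) > 0. -/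
open Matrix

/-- Lemma 1(e): the dual solutions `π_1*, π_2*, …` generated at distinct
iterations of the modified Benders algorithm are pairwise distinct.  At
iteration `j` the pair `(w_j, π_j*)` satisfies `w_j ∈ W(x^j)` and
`π_j*ᵀ(b − Ax^j − Cw_j) = R(x^j) > 0`, while `x^{j₂}` satisfies the cuts
`0 ≥ π_{j₁}*ᵀ(b − Ax^{j₂} − Cw)` for all `w ∈ W(x^{j₂})` and all `j₁ < j₂`;
hence `π_{j₁}* ≠ π_{j₂}*` whenever `j₁ < j₂`. -/
theorem stmt_14 (m nx nw r : ℕ)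
    (A : Matrix (Fin m) (Fin nx) ℝ) (C : Matrix (Fin m) (Fin nw) ℝ) (b : Fin m → ℝ)
    (G : Matrix (Fin r) (Fin nw) ℝ) (g : Fin r → ℝ) (Δ : Matrix (Fin r) (Fin nx) ℝ)
    (x : ℕ → Fin nx → ℝ) (w : ℕ → Fin nw → ℝ) (πs : ℕ → Fin m → ℝ)
    (hw : ∀ j, G.mulVec (w j) ≤ g + Δ.mulVec (x j))
    (hpos : ∀ j, 0 < πs j ⬝ᵥ (b - A.mulVec (x j) - C.mulVec (w j)))
    (hcut : ∀ j₂ j₁, j₁ < j₂ → ∀ w', G.mulVec w' ≤ g + Δ.mulVec (x j₂) →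
      πs j₁ ⬝ᵥ (b - A.mulVec (x j₂) - C.mulVec w') ≤ 0) :
    ∀ j₁ j₂, j₁ < j₂ → πs j₁ ≠ πs j₂ := by
  intro j₁ j₂ hlt hπ
  have hcut_at_max := hcut j₂ j₁ hlt (w j₂) (hw j₂)
  rw [hπ] at hcut_at_max
  exact (hpos j₂).not_ge hcut_at_max
end
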